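/- arXiv:2009.09992 — 4 statements merged into one kernel-verified Lean document; each statement's English description precedes it below -/
import Mathlib

section
/- Let X₁,…,X₁₀ be positive real numbers each less than 2.2636302 with X₁ > 1 and X₁X₂⋯X₁₀ = 1. If Xᵢ > 1 for all 3 ≤ i ≤ 10, then 4X₁ - 2X₁²/X₂ + X₃ + X₄ + ⋯ + X₁₀ ≤ 10. -/
lemma step_3 (a b : ℝ) (ha : 1 < a) (hb : 1 < b) : 1 < a * b ∧ a + b ≤ a * b + 1 := by
  constructor <;> nlinarith [(a - 1) * (b - 1)]

theorem stmt_3 (X₁ X₂ X₃ X₄ X₅ X₆ X₇ X₈ X₉ X₁₀ : ℝ)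
    (hpos : 0 < X₁ ∧ 0 < X₂ ∧ 0 < X₃ ∧ 0 < X₄ ∧ 0 < X₅ ∧ 0 < X₆ ∧ 0 < X₇ ∧ 0 < X₈ ∧ 0 < X₉ ∧ 0 < X₁₀)
    (hub : X₁ < 2.2636302 ∧ X₂ < 2.2636302 ∧ X₃ < 2.2636302 ∧ X₄ < 2.2636302 ∧ X₅ < 2.2636302 ∧
      X₆ < 2.2636302 ∧ X₇ < 2.2636302 ∧ X₈ < 2.2636302 ∧ X₉ < 2.2636302 ∧ X₁₀ < 2.2636302)
    (h1 : 1 < X₁)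
    (hprod : X₁ * X₂ * X₃ * X₄ * X₅ * X₆ * X₇ * X₈ * X₉ * X₁₀ = 1)
    (hgt : 1 < X₃ ∧ 1 < X₄ ∧ 1 < X₅ ∧ 1 < X₆ ∧ 1 < X₇ ∧ 1 < X₈ ∧ 1 < X₉ ∧ 1 < X₁₀) :
    4 * X₁ - 2 * X₁ ^ 2 / X₂ + X₃ + X₄ + X₅ + X₆ + X₇ + X₈ + X₉ + X₁₀ ≤ 10 := by
  obtain ⟨p1, p2, p3, p4, p5, p6, p7, p8, p9, p10⟩ := hpos
  obtain ⟨g3, g4, g5, g6, g7, g8, g9, g10⟩ := hgt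
  have hdiv : X₁ ^ 2 / X₂ = X₁ ^ 3 * (X₃ * X₄ * X₅ * X₆ * X₇ * X₈ * X₉ * X₁₀) := by
    rw [div_eq_iff (ne_of_gt p2)]
    linear_combination -X₁ ^ 2 * hprod
  clear hprod hub
  -- successive products
  have h4 : 1 < X₃ * X₄ ∧ X₃ + X₄ ≤ X₃ * X₄ + 1 := by
    have := step_3 X₃ X₄ g3 g4; exact ⟨this.1, by linarith [this.2]⟩
  have h5 : 1 < X₃ * X₄ * X₅ ∧ X₃ + X₄ + X₅ ≤ X₃ * X₄ * X₅ + 2 := by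
    have t := step_3 (X₃ * X₄) X₅ h4.1 g5
    exact ⟨t.1, by linarith [t.2, h4.2]⟩
  have h6 : 1 < X₃ * X₄ * X₅ * X₆ ∧ X₃ + X₄ + X₅ + X₆ ≤ X₃ * X₄ * X₅ * X₆ + 3 := by
    have t := step_3 (X₃ * X₄ * X₅) X₆ h5.1 g6
    exact ⟨t.1, by linarith [t.2, h5.2]⟩
  have h7 : 1 < X₃ * X₄ * X₅ * X₆ * X₇ ∧
      X₃ + X₄ + X₅ + X₆ + X₇ ≤ X₃ * X₄ * X₅ * X₆ * X₇ + 4 := by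
    have t := step_3 (X₃ * X₄ * X₅ * X₆) X₇ h6.1 g7
    exact ⟨t.1, by linarith [t.2, h6.2]⟩
  have h8 : 1 < X₃ * X₄ * X₅ * X₆ * X₇ * X₈ ∧
      X₃ + X₄ + X₅ + X₆ + X₇ + X₈ ≤ X₃ * X₄ * X₅ * X₆ * X₇ * X₈ + 5 := by
    have t := step_3 (X₃ * X₄ * X₅ * X₆ * X₇) X₈ h7.1 g8
    exact ⟨t.1, by linarith [t.2, h7.2]⟩
  have h9 : 1 < X₃ * X₄ * X₅ * X₆ * X₇ * X₈ * X₉ ∧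
      X₃ + X₄ + X₅ + X₆ + X₇ + X₈ + X₉ ≤ X₃ * X₄ * X₅ * X₆ * X₇ * X₈ * X₉ + 6 := by
    have t := step_3 (X₃ * X₄ * X₅ * X₆ * X₇ * X₈) X₉ h8.1 g9
    exact ⟨t.1, by linarith [t.2, h8.2]⟩
  set P : ℝ := X₃ * X₄ * X₅ * X₆ * X₇ * X₈ * X₉ * X₁₀ with hP
  have h10 : 1 < P ∧ X₃ + X₄ + X₅ + X₆ + X₇ + X₈ + X₉ + X₁₀ ≤ P + 7 := by
    have t := step_3 (X₃ * X₄ * X₅ * X₆ * X₇ * X₈ * X₉) X₁₀ h9.1 g10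
    exact ⟨t.1, by linarith [t.2, h9.2]⟩
  rw [show 2 * X₁ ^ 2 / X₂ = 2 * (X₁ ^ 3 * P) by rw [← hdiv]; ring]
  clear hdiv h4 h5 h6 h7 h8 h9 hP g3 g4 g5 g6 g7 g8 g9 g10 p2 p3 p4 p5 p6 p7 p8 p9 p10
  have hc : 1 ≤ X₁ ^ 3 := one_le_pow₀ h1.le
  have A : 0 ≤ (P - 1) * (2 * X₁ ^ 3 - 1) :=
    mul_nonneg (by linarith [h10.1]) (by linarith)
  have B : 0 ≤ (X₁ - 1) * (X₁ ^ 2 + X₁ - 1) :=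
    mul_nonneg (by linarith) (by nlinarith [sq_nonneg X₁, h1, p1])
  nlinarith [A, B, h10.2]
end

section
/- Let X₁,…,X₁₀ be positive reals, each less than 2.2636302, with X₁ > 1 and X₁X₂⋯X₁₀ = 1. If Xᵢ > 1 for i ∈ {3,5,7,9,10}, then 4X₁ - 2X₁²/X₂ + 4X₃ - 2X₃²/X₄ + 4X₅ - 2X₅²/X₆ + 4X₇ - 2X₇²/X₈ + X₉ + X₁₀ ≤ 10. -/
private lemma log_lb1 (t : ℝ) (ht : 0 < t) : 1 - 1/t ≤ Real.log t := by
  have h := Real.log_le_sub_one_of_pos (inv_pos.2 ht)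
  rw [Real.log_inv] at h
  have h2 : (1:ℝ)/t = t⁻¹ := one_div t
  linarith

private lemma log_lb2 (t : ℝ) (ht : 0 < t) : 2 - 2/Real.sqrt t ≤ Real.log t := by
  have hs : 0 < Real.sqrt t := Real.sqrt_pos.2 ht
  have h1 : 1 - 1/Real.sqrt t ≤ Real.log (Real.sqrt t) := log_lb1 _ hs
  have h2 : Real.log (Real.sqrt t) = Real.log t / 2 := Real.log_sqrt ht.le
  have h3 : (2:ℝ)/Real.sqrt t = 2*(1/Real.sqrt t) := by ring
  rw [h2] at h1
  linarith

private lemma pairPoly (s r : ℝ) (hs1 : 1 ≤ s) (hs2 : s ≤ 1.5046)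
    (hr0 : 0 < r) (hr2 : r ≤ 1.5046) :
    0 ≤ 2*s^5 - 4*s^3*r^2 + 10*s*r^2 - 4*r^2 - 4*s*r := by
  have h1 : (0:ℝ) ≤ s - 1 := by linarith
  rcases le_or_gt s 1.16 with hc | hc
  · -- case A : discriminant certificate, A := -4s^3+10s-4 > 0
    have hA : (0:ℝ) < -4*s^3+10*s-4 := by nlinarith [mul_nonneg h1 h1, mul_nonneg (mul_nonneg h1 h1) h1]
    have hq : (0:ℝ) ≤ -2*s^5-2*s^4+3*s^3+s^2+s+1 := by
      nlinarith [mul_nonneg h1 (show (0:ℝ) ≤ 1.16 - s by linarith),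
        mul_nonneg (mul_nonneg h1 h1) (show (0:ℝ) ≤ 1.16 - s by linarith),
        mul_nonneg (mul_nonneg (mul_nonneg h1 h1) h1) (show (0:ℝ) ≤ 1.16 - s by linarith),
        mul_nonneg (mul_nonneg (mul_nonneg (mul_nonneg h1 h1) h1) h1) (show (0:ℝ) ≤ 1.16 - s by linarith)]
    have hf : (0:ℝ) ≤ -4*s^6+10*s^4-4*s^3-2 := by nlinarith [mul_nonneg h1 hq]
    have key : (0:ℝ) ≤ (-4*s^3+10*s-4) * (2*s^5 - 4*s^3*r^2 + 10*s*r^2 - 4*r^2 - 4*s*r) := by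
      have h5 : (-4*s^3+10*s-4) * (2*s^5 - 4*s^3*r^2 + 10*s*r^2 - 4*r^2 - 4*s*r)
          = ((-4*s^3+10*s-4)*r - 2*s)^2 + 2*s^2*(-4*s^6+10*s^4-4*s^3-2) := by ring
      rw [h5]
      have := sq_nonneg ((-4*s^3+10*s-4)*r - 2*s)
      nlinarith [mul_nonneg (sq_nonneg s) hf]
    by_contra hP
    push_neg at hP
    have := mul_neg_of_pos_of_neg hA hP
    linarith
  · -- case B : s ≥ 1.16; P = g(s) + (r-c)(A(r+c)-4s) with c = 1.5046
    have h16 : (0:ℝ) ≤ s - 1.16 := by linarith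
    have h46 : (0:ℝ) ≤ 1.5046 - s := by linarith
    have hg : (0:ℝ) ≤ (-4*s^3+10*s-4)*(1.5046:ℝ)^2 - 4*s*1.5046 + 2*s^5 := by
      nlinarith [mul_nonneg h16 h46, mul_nonneg (mul_nonneg h16 h46) h16,
        mul_nonneg (mul_nonneg h16 h46) h46, sq_nonneg (s - 1.34),
        mul_nonneg (mul_nonneg (mul_nonneg h16 h46) h16) h16,
        mul_nonneg (mul_nonneg (mul_nonneg h16 h46) h46) h46,
        mul_nonneg (sq_nonneg (s-1.34)) h16, mul_nonneg (sq_nonneg (s-1.34)) h46]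
    have hneg : (-4*s^3+10*s-4)*(r+1.5046) - 4*s ≤ 0 := by
      rcases le_or_gt (-4*s^3+10*s-4) 0 with hA | hA
      · have hrc : (0:ℝ) < r + 1.5046 := by linarith
        nlinarith [mul_nonpos_of_nonpos_of_nonneg hA hrc.le]
      · -- A > 0 : A*(r+c) ≤ 2cA ≤ 4s since 1.5046*A ≤ 2s for s ≥ 1.16
        have hphi : 1.5046*(-4*s^3+10*s-4) ≤ 2*s := by
          nlinarith [mul_nonneg h16 h16, mul_nonneg (mul_nonneg h16 h16) h16]
        have : (-4*s^3+10*s-4)*(r+1.5046) ≤ (-4*s^3+10*s-4)*(1.5046+1.5046) :=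
          mul_le_mul_of_nonneg_left (by linarith) hA.le
        nlinarith
    have hfac : (0:ℝ) ≤ (r - 1.5046) * ((-4*s^3+10*s-4)*(r+1.5046) - 4*s) := by
      have := mul_nonneg (show (0:ℝ) ≤ -(r - 1.5046) by linarith)
        (show (0:ℝ) ≤ -((-4*s^3+10*s-4)*(r+1.5046) - 4*s) by linarith)
      nlinarith [this]
    nlinarith [hg, hfac]

private lemma sqrt_facts (t : ℝ) (h1 : 1 ≤ t) (hU : t ≤ 2.2636302) :
    1 ≤ Real.sqrt t ∧ Real.sqrt t ≤ 1.5046 ∧ (Real.sqrt t)^2 = t := by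
  have ht0 : (0:ℝ) < t := by linarith
  have hsq : (Real.sqrt t)^2 = t := Real.sq_sqrt ht0.le
  have hnn : 0 ≤ Real.sqrt t := Real.sqrt_nonneg t
  constructor
  · nlinarith [hsq]
  constructor
  · nlinarith [hsq]
  · exact hsq

private lemma pair_ineq (X Y : ℝ) (hX1 : 1 ≤ X) (hXU : X ≤ 2.2636302)
    (hY0 : 0 < Y) (hYU : Y ≤ 2.2636302) :
    4*X - 2*X^2/Y ≤ 2 + 2*Real.log X + 2*Real.log Y := by
  obtain ⟨hs1, hs2, hs⟩ := sqrt_facts X hX1 hXU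
  set s := Real.sqrt X with hsdef
  set r := Real.sqrt Y with hrdef
  have hr0 : 0 < r := Real.sqrt_pos.2 hY0
  have hr : r^2 = Y := Real.sq_sqrt hY0.le
  have hr2 : r ≤ 1.5046 := by nlinarith [hr]
  have hpoly := pairPoly s r hs1 hs2 hr0 hr2
  have hX0 : (0:ℝ) < X := by linarith
  have hlogX := log_lb2 X hX0
  have hlogY := log_lb2 Y hY0
  have hsp : (0:ℝ) < s := by linarith
  have hkey : 4*X - 2*X^2/Y ≤ 10 - 4/s - 4/r := by
    rw [← hs, ← hr]
    have hden : (0:ℝ) < s*r^2 := by positivity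
    have expand : (10 - 4/s - 4/r) - (4*s^2 - 2*(s^2)^2/r^2)
        = (2*s^5 - 4*s^3*r^2 + 10*s*r^2 - 4*r^2 - 4*s*r)/(s*r^2) := by
      field_simp
      ring
    have hdiv : 0 ≤ (2*s^5 - 4*s^3*r^2 + 10*s*r^2 - 4*r^2 - 4*s*r)/(s*r^2) :=
      div_nonneg hpoly hden.le
    linarith [expand ▸ hdiv]
  have e1 : (4:ℝ)/s = 2*(2/s) := by ring
  have e2 : (4:ℝ)/r = 2*(2/r) := by ring
  linarith

private lemma single_ineq (t : ℝ) (h1 : 1 ≤ t) (hU : t ≤ 2.2636302) :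
    t ≤ 1 + 2*Real.log t := by
  obtain ⟨hs1, hs2, hs⟩ := sqrt_facts t h1 hU
  set s := Real.sqrt t
  have ht0 : (0:ℝ) < t := by linarith
  have hlog := log_lb2 t ht0
  have hsp : (0:ℝ) < s := by linarith
  have hpoly : (0:ℝ) ≤ 5*s - 4 - s^3 := by
    nlinarith [mul_nonneg (show (0:ℝ) ≤ s - 1 by linarith)
      (show (0:ℝ) ≤ 4 - s - s^2 by nlinarith)]
  have expand : (5 - 4/s) - s^2 = (5*s - 4 - s^3)/s := by
    field_simp
  have hdiv : 0 ≤ (5*s - 4 - s^3)/s := div_nonneg hpoly hsp.le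
  have ht : t ≤ 5 - 4/s := by nlinarith [expand ▸ hdiv]
  have e1 : (4:ℝ)/s = 2*(2/s) := by ring
  linarith

theorem stmt_4 (X₁ X₂ X₃ X₄ X₅ X₆ X₇ X₈ X₉ X₁₀ : ℝ)
    (hpos : 0 < X₁ ∧ 0 < X₂ ∧ 0 < X₃ ∧ 0 < X₄ ∧ 0 < X₅ ∧ 0 < X₆ ∧ 0 < X₇ ∧ 0 < X₈ ∧ 0 < X₉ ∧ 0 < X₁₀)
    (hub : X₁ < 2.2636302 ∧ X₂ < 2.2636302 ∧ X₃ < 2.2636302 ∧ X₄ < 2.2636302 ∧ X₅ < 2.2636302 ∧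
      X₆ < 2.2636302 ∧ X₇ < 2.2636302 ∧ X₈ < 2.2636302 ∧ X₉ < 2.2636302 ∧ X₁₀ < 2.2636302)
    (h1 : 1 < X₁)
    (hprod : X₁ * X₂ * X₃ * X₄ * X₅ * X₆ * X₇ * X₈ * X₉ * X₁₀ = 1)
    (hgt : 1 < X₃ ∧ 1 < X₅ ∧ 1 < X₇ ∧ 1 < X₉ ∧ 1 < X₁₀) :
    4 * X₁ - 2 * X₁ ^ 2 / X₂ + 4 * X₃ - 2 * X₃ ^ 2 / X₄ + 4 * X₅ - 2 * X₅ ^ 2 / X₆ +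
      4 * X₇ - 2 * X₇ ^ 2 / X₈ + X₉ + X₁₀ ≤ 10 := by
  obtain ⟨p1, p2, p3, p4, p5, p6, p7, p8, p9, p10⟩ := hpos
  obtain ⟨u1, u2, u3, u4, u5, u6, u7, u8, u9, u10⟩ := hub
  obtain ⟨g3, g5, g7, g9, g10⟩ := hgt
  have hlogsum : Real.log X₁ + Real.log X₂ + Real.log X₃ + Real.log X₄ + Real.log X₅ +
      Real.log X₆ + Real.log X₇ + Real.log X₈ + Real.log X₉ + Real.log X₁₀ = 0 := by
    have h := congrArg Real.log hprod
    rw [Real.log_mul (by positivity) (by positivity), Real.log_mul (by positivity) (by positivity),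
      Real.log_mul (by positivity) (by positivity), Real.log_mul (by positivity) (by positivity),
      Real.log_mul (by positivity) (by positivity), Real.log_mul (by positivity) (by positivity),
      Real.log_mul (by positivity) (by positivity), Real.log_mul (by positivity) (by positivity),
      Real.log_mul (by positivity) (by positivity), Real.log_one] at h
    linarith
  have P1 := pair_ineq X₁ X₂ h1.le u1.le p2 u2.le
  have P3 := pair_ineq X₃ X₄ g3.le u3.le p4 u4.le
  have P5 := pair_ineq X₅ X₆ g5.le u5.le p6 u6.le
  have P7 := pair_ineq X₇ X₈ g7.le u7.le p8 u8.le
  have S9 := single_ineq X₉ g9.le u9.le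
  have S10 := single_ineq X₁₀ g10.le u10.le
  linarith
end

section
/- Let X₁,…,X₁₀ be positive reals each less than 2.2636302, with X₁ > 1, X₁X₂⋯X₁₀ = 1, Xᵢ > 1 for i ∈ {4, 7, 10}, and X₁₀ ≤ X₁. Then 4X₁ - X₁³/(X₂X₃) + 4X₄ - X₄³/(X₅X₆) + 4X₇ - X₇³/(X₈X₉) + X₁₀ ≤ 10. -/
/-!
Write `g = X₁X₄X₇` and `zᵢ` for the three quotients `X³/(XX)`. The product constraint gives
`z₁z₂z₃ = g⁴X₁₀`, so by AM-GM the subtracted terms are at least `3 (g⁴X₁₀)^{1/3}`, while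
`X₁ + X₄ + X₇ ≤ g + 2` because all three factors exceed `1`. It remains to see
`4g + X₁₀ - 2 ≤ 3 (g⁴X₁₀)^{1/3}` for `1 ≤ X₁₀ ≤ g`, a polynomial inequality after cubing.
-/

lemma twenty_seven_mul_le_add_pow_three {a b c : ℝ} (ha : 0 ≤ a) (hb : 0 ≤ b) (hc : 0 ≤ c) :
    27 * (a * b * c) ≤ (a + b + c) ^ 3 := by
  nlinarith [sq_nonneg (a - b), sq_nonneg (b - c), sq_nonneg (a - c),
    mul_nonneg ha hb, mul_nonneg hb hc, mul_nonneg ha hc,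
    mul_nonneg (add_nonneg (add_nonneg ha hb) hc) (sq_nonneg (a - b)),
    mul_nonneg (add_nonneg (add_nonneg ha hb) hc) (sq_nonneg (b - c)),
    mul_nonneg (add_nonneg (add_nonneg ha hb) hc) (sq_nonneg (a - c))]

lemma three_mul_le_add_of_pow_three_le_mul {a b c s : ℝ} (ha : 0 ≤ a) (hb : 0 ≤ b) (hc : 0 ≤ c)
    (hs : s ^ 3 ≤ a * b * c) : 3 * s ≤ a + b + c := by
  have habc : 0 ≤ a + b + c := by positivity
  rcases lt_or_ge s 0 with hs0 | hs0
  · linarith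
  refine le_of_pow_le_pow_left₀ three_ne_zero habc ?_
  calc (3 * s) ^ 3 = 27 * s ^ 3 := by ring
    _ ≤ 27 * (a * b * c) := by gcongr
    _ ≤ (a + b + c) ^ 3 := twenty_seven_mul_le_add_pow_three ha hb hc

lemma add_add_le_mul_mul_add_two {x y z : ℝ} (hx : 1 ≤ x) (hy : 1 ≤ y) (hz : 1 ≤ z) :
    x + y + z ≤ x * y * z + 2 := by
  have hxy : x + y ≤ x * y + 1 := by nlinarith [mul_nonneg (sub_nonneg.2 hx) (sub_nonneg.2 hy)]
  have hxy1 : 1 ≤ x * y := one_le_mul_of_one_le_of_one_le hx hy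
  nlinarith [mul_nonneg (sub_nonneg.2 hxy1) (sub_nonneg.2 hz)]

-- The difference is concave in `x`, so it suffices to check the endpoints `x = 1` and `x = g`.
lemma div_three_pow_three_le_pow_four_mul {g x : ℝ} (hx : 1 ≤ x) (hxg : x ≤ g) :
    ((4 * g + x - 2) / 3) ^ 3 ≤ g ^ 4 * x := by
  have hg : 1 ≤ g := hx.trans hxg
  have hleft : (4 * g - 1) ^ 3 ≤ 27 * g ^ 4 := by
    nlinarith [sq_nonneg (g - 1), mul_nonneg (sq_nonneg (g - 1)) (sub_nonneg.2 hg),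
      sq_nonneg (3 * g - 1)]
  have hright : (5 * g - 2) ^ 3 ≤ 27 * g ^ 5 := by
    nlinarith [sq_nonneg (g - 1), mul_nonneg (sq_nonneg (g - 1)) (sub_nonneg.2 hg),
      mul_nonneg (mul_nonneg (sq_nonneg (g - 1)) (sub_nonneg.2 hg)) (sub_nonneg.2 hg),
      mul_nonneg (sq_nonneg (g - 1)) (sq_nonneg g)]
  have hinterp : (g - 1) * (27 * (g ^ 4 * x) - (4 * g + x - 2) ^ 3)
      = (g - x) * (27 * g ^ 4 - (4 * g - 1) ^ 3) + (x - 1) * (27 * g ^ 5 - (5 * g - 2) ^ 3)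
        + (g - 1) * (x - 1) * (g - x) * (13 * g + x - 5) := by ring
  have hcurv : 0 ≤ (g - 1) * (x - 1) * (g - x) * (13 * g + x - 5) := by
    have := sub_nonneg.2 hg; have := sub_nonneg.2 hx; have := sub_nonneg.2 hxg
    have : 0 ≤ 13 * g + x - 5 := by linarith
    positivity
  rcases hg.eq_or_lt with rfl | hg1
  · have : x = 1 := le_antisymm hxg hx
    subst this; norm_num
  have hdiff : 0 ≤ (g - 1) * (27 * (g ^ 4 * x) - (4 * g + x - 2) ^ 3) := by
    rw [hinterp]
    have := mul_nonneg (sub_nonneg.2 hxg) (sub_nonneg.2 hleft)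
    have := mul_nonneg (sub_nonneg.2 hx) (sub_nonneg.2 hright)
    linarith
  have hcube := (mul_nonneg_iff_of_pos_left (sub_pos.2 hg1)).1 hdiff
  rw [div_pow]
  linarith

theorem stmt_5_general (X₁ X₂ X₃ X₄ X₅ X₆ X₇ X₈ X₉ X₁₀ : ℝ)
    (hpos : 0 < X₁ ∧ 0 < X₂ ∧ 0 < X₃ ∧ 0 < X₄ ∧ 0 < X₅ ∧ 0 < X₆ ∧ 0 < X₇ ∧ 0 < X₈ ∧ 0 < X₉ ∧ 0 < X₁₀)
    (h1 : 1 < X₁)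
    (hprod : X₁ * X₂ * X₃ * X₄ * X₅ * X₆ * X₇ * X₈ * X₉ * X₁₀ = 1)
    (hgt : 1 < X₄ ∧ 1 < X₇ ∧ 1 < X₁₀)
    (h10 : X₁₀ ≤ X₁) :
    4 * X₁ - X₁ ^ 3 / (X₂ * X₃) + 4 * X₄ - X₄ ^ 3 / (X₅ * X₆) +
      4 * X₇ - X₇ ^ 3 / (X₈ * X₉) + X₁₀ ≤ 10 := by
  obtain ⟨p1, p2, p3, p4, p5, p6, p7, p8, p9, p10⟩ := hpos
  obtain ⟨g4, g7, g10⟩ := hgt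
  have hquot : X₁ ^ 3 / (X₂ * X₃) * (X₄ ^ 3 / (X₅ * X₆)) * (X₇ ^ 3 / (X₈ * X₉))
      = (X₁ * X₄ * X₇) ^ 4 * X₁₀ := by
    field_simp
    linear_combination (-1 : ℝ) * hprod
  have hX₁₀ : X₁₀ ≤ X₁ * X₄ * X₇ := by
    have : 1 ≤ X₄ * X₇ := one_le_mul_of_one_le_of_one_le g4.le g7.le
    nlinarith
  have hamgm := three_mul_le_add_of_pow_three_le_mul (by positivity) (by positivity)
    (by positivity) (hquot ▸ div_three_pow_three_le_pow_four_mul g10.le hX₁₀)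
  have hsum := add_add_le_mul_mul_add_two h1.le g4.le g7.le
  linarith

theorem stmt_5 (X₁ X₂ X₃ X₄ X₅ X₆ X₇ X₈ X₉ X₁₀ : ℝ)
    (hpos : 0 < X₁ ∧ 0 < X₂ ∧ 0 < X₃ ∧ 0 < X₄ ∧ 0 < X₅ ∧ 0 < X₆ ∧ 0 < X₇ ∧ 0 < X₈ ∧ 0 < X₉ ∧ 0 < X₁₀)
    (hub : X₁ < 2.2636302 ∧ X₂ < 2.2636302 ∧ X₃ < 2.2636302 ∧ X₄ < 2.2636302 ∧ X₅ < 2.2636302 ∧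
      X₆ < 2.2636302 ∧ X₇ < 2.2636302 ∧ X₈ < 2.2636302 ∧ X₉ < 2.2636302 ∧ X₁₀ < 2.2636302)
    (h1 : 1 < X₁)
    (hprod : X₁ * X₂ * X₃ * X₄ * X₅ * X₆ * X₇ * X₈ * X₉ * X₁₀ = 1)
    (hgt : 1 < X₄ ∧ 1 < X₇ ∧ 1 < X₁₀)
    (h10 : X₁₀ ≤ X₁) :
    4 * X₁ - X₁ ^ 3 / (X₂ * X₃) + 4 * X₄ - X₄ ^ 3 / (X₅ * X₆) +
      4 * X₇ - X₇ ^ 3 / (X₈ * X₉) + X₁₀ ≤ 10 :=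
  stmt_5_general X₁ X₂ X₃ X₄ X₅ X₆ X₇ X₈ X₉ X₁₀ hpos h1 hprod hgt h10
end

section
/- Let x₁ = X₁ - 1 and for 4 ≤ i ≤ 10 write xᵢ = |Xᵢ - 1|, where X₁,…,X₁₀ are positive reals each less than 2.2636302 with X₁ > 1 and X₁X₂⋯X₁₀ = 1. Let γ be the sum of xᵢ over those 4 ≤ i ≤ 10 with Xᵢ ≤ 1. If γ ≤ x₁ ≤ 0.5, then 4X₁ - X₁⁴X₄X₅⋯X₁₀ + X₄ + X₅ + ⋯ + X₁₀ ≤ 10. -/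
private lemma decomp (X : ℝ) (hX : 0 < X) :
    ∃ p q : ℝ, 0 ≤ p ∧ 0 ≤ q ∧ q ≤ 1 ∧ X = (1 + p) * (1 - q) ∧ X = 1 + p - q ∧
      (if X ≤ 1 then |X - 1| else 0) = q := by
  by_cases h : X ≤ 1
  · refine ⟨0, 1 - X, le_refl 0, by linarith, by linarith, by ring, by ring, ?_⟩
    rw [if_pos h, abs_of_nonpos (by linarith)]; ring
  · refine ⟨X - 1, 0, by linarith, le_refl 0, by norm_num, by ring, by ring, ?_⟩
    rw [if_neg h]

private lemma stepC (t s g p q : ℝ) (ht : (1+s)*(1-g) ≤ t) (hs : 0 ≤ s) (hg : 0 ≤ g)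
    (hp : 0 ≤ p) (hq0 : 0 ≤ q) (hq1 : q ≤ 1) (hgq : g + q ≤ 1) :
    (1+(s+p))*(1-(g+q)) ≤ t*((1+p)*(1-q)) := by
  have h1 : (1+s)*(1-g)*((1+p)*(1-q)) ≤ t*((1+p)*(1-q)) := by
    apply mul_le_mul_of_nonneg_right ht
    apply mul_nonneg (by linarith) (by linarith)
  have h2 : (1+(s+p))*(1-(g+q)) ≤ (1+s)*(1-g)*((1+p)*(1-q)) := by
    nlinarith [mul_nonneg (mul_nonneg hg hq0) (by linarith : (0:ℝ) ≤ 1+s+p),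
      mul_nonneg (mul_nonneg hs hp) (by linarith : (0:ℝ) ≤ 1-g-q),
      mul_nonneg (mul_nonneg hs hp) (mul_nonneg hg hq0)]
  linarith

private lemma key (x δ γ : ℝ) (hγ0 : 0 ≤ γ) (hγx : γ ≤ x) (hx : x ≤ 1/2) (hδ : 0 ≤ δ) :
    1 + 4*x + δ - γ ≤ (1+x)^4 * ((1+δ) * (1-γ)) := by
  have hx0 : 0 ≤ x := le_trans hγ0 hγx
  have hin : 0 ≤ 2 - 2*x - 3*x^2 - x^3 := by
    nlinarith [mul_nonneg hx0 (by linarith : (0:ℝ) ≤ 1/2 - x),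
      mul_nonneg (mul_nonneg hx0 hx0) (by linarith : (0:ℝ) ≤ 1/2 - x)]
  have h1 : 0 ≤ x^2 * (2 - 2*x - 3*x^2 - x^3) := mul_nonneg (sq_nonneg x) hin
  have h2 : 0 ≤ δ * (3*x + 2*x^2 - 2*x^3 - 3*x^4 - x^5) := by
    apply mul_nonneg hδ; nlinarith
  have h3 : 0 ≤ (x - γ) * (4*x + 6*x^2 + 4*x^3 + x^4) := by
    apply mul_nonneg (by linarith); nlinarith
  have h4 : 0 ≤ δ * ((x - γ) * (1 + 4*x + 6*x^2 + 4*x^3 + x^4)) := by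
    apply mul_nonneg hδ; apply mul_nonneg (by linarith); nlinarith
  nlinarith [h1, h2, h3, h4]

theorem stmt_6 (X₁ X₂ X₃ X₄ X₅ X₆ X₇ X₈ X₉ X₁₀ : ℝ)
    (hpos : 0 < X₁ ∧ 0 < X₂ ∧ 0 < X₃ ∧ 0 < X₄ ∧ 0 < X₅ ∧ 0 < X₆ ∧ 0 < X₇ ∧ 0 < X₈ ∧ 0 < X₉ ∧ 0 < X₁₀)
    (hub : X₁ < 2.2636302 ∧ X₂ < 2.2636302 ∧ X₃ < 2.2636302 ∧ X₄ < 2.2636302 ∧ X₅ < 2.2636302 ∧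
      X₆ < 2.2636302 ∧ X₇ < 2.2636302 ∧ X₈ < 2.2636302 ∧ X₉ < 2.2636302 ∧ X₁₀ < 2.2636302)
    (h1 : 1 < X₁)
    (hprod : X₁ * X₂ * X₃ * X₄ * X₅ * X₆ * X₇ * X₈ * X₉ * X₁₀ = 1)
    (hγ : (if X₄ ≤ 1 then |X₄ - 1| else 0) + (if X₅ ≤ 1 then |X₅ - 1| else 0) +
      (if X₆ ≤ 1 then |X₆ - 1| else 0) + (if X₇ ≤ 1 then |X₇ - 1| else 0) +
      (if X₈ ≤ 1 then |X₈ - 1| else 0) + (if X₉ ≤ 1 then |X₉ - 1| else 0) +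
      (if X₁₀ ≤ 1 then |X₁₀ - 1| else 0) ≤ X₁ - 1)
    (hx1 : X₁ - 1 ≤ 0.5) :
    4 * X₁ - X₁ ^ 4 * X₄ * X₅ * X₆ * X₇ * X₈ * X₉ * X₁₀ +
      X₄ + X₅ + X₆ + X₇ + X₈ + X₉ + X₁₀ ≤ 10 := by
  obtain ⟨-, -, -, h4, h5, h6, h7, h8, h9, h10⟩ := hpos
  obtain ⟨p4, q4, hp4, hq4, hq4', he4, hl4, hi4⟩ := decomp X₄ h4
  obtain ⟨p5, q5, hp5, hq5, hq5', he5, hl5, hi5⟩ := decomp X₅ h5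
  obtain ⟨p6, q6, hp6, hq6, hq6', he6, hl6, hi6⟩ := decomp X₆ h6
  obtain ⟨p7, q7, hp7, hq7, hq7', he7, hl7, hi7⟩ := decomp X₇ h7
  obtain ⟨p8, q8, hp8, hq8, hq8', he8, hl8, hi8⟩ := decomp X₈ h8
  obtain ⟨p9, q9, hp9, hq9, hq9', he9, hl9, hi9⟩ := decomp X₉ h9
  obtain ⟨p10, q10, hp10, hq10, hq10', he10, hl10, hi10⟩ := decomp X₁₀ h10
  rw [hi4, hi5, hi6, hi7, hi8, hi9, hi10] at hγ
  have hxh : X₁ - 1 ≤ 1/2 := by norm_num at hx1 ⊢; linarith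
  -- incremental product lower bound
  have c4 : (1+p4)*(1-q4) ≤ X₄ := le_of_eq he4.symm
  have c5 : (1+(p4+p5))*(1-(q4+q5)) ≤ X₄*X₅ := by
    rw [he5]; exact stepC _ _ _ _ _ c4 hp4 hq4 hp5 hq5 hq5' (by linarith)
  have c6 : (1+(p4+p5+p6))*(1-(q4+q5+q6)) ≤ X₄*X₅*X₆ := by
    rw [he6]; exact stepC _ _ _ _ _ c5 (by linarith) (by linarith) hp6 hq6 hq6' (by linarith)
  have c7 : (1+(p4+p5+p6+p7))*(1-(q4+q5+q6+q7)) ≤ X₄*X₅*X₆*X₇ := by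
    rw [he7]; exact stepC _ _ _ _ _ c6 (by linarith) (by linarith) hp7 hq7 hq7' (by linarith)
  have c8 : (1+(p4+p5+p6+p7+p8))*(1-(q4+q5+q6+q7+q8)) ≤ X₄*X₅*X₆*X₇*X₈ := by
    rw [he8]; exact stepC _ _ _ _ _ c7 (by linarith) (by linarith) hp8 hq8 hq8' (by linarith)
  have c9 : (1+(p4+p5+p6+p7+p8+p9))*(1-(q4+q5+q6+q7+q8+q9)) ≤ X₄*X₅*X₆*X₇*X₈*X₉ := by
    rw [he9]; exact stepC _ _ _ _ _ c8 (by linarith) (by linarith) hp9 hq9 hq9' (by linarith)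
  have c10 : (1+(p4+p5+p6+p7+p8+p9+p10))*(1-(q4+q5+q6+q7+q8+q9+q10)) ≤
      X₄*X₅*X₆*X₇*X₈*X₉*X₁₀ := by
    rw [he10]; exact stepC _ _ _ _ _ c9 (by linarith) (by linarith) hp10 hq10 hq10' (by linarith)
  have hkey := key (X₁ - 1) (p4+p5+p6+p7+p8+p9+p10) (q4+q5+q6+q7+q8+q9+q10)
    (by linarith) (by linarith) hxh (by linarith)
  have hX1 : (1 + (X₁ - 1))^4 = X₁ ^ 4 := by ring
  rw [hX1] at hkey
  have hmain : X₁ ^ 4 * ((1+(p4+p5+p6+p7+p8+p9+p10))*(1-(q4+q5+q6+q7+q8+q9+q10))) ≤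
      X₁ ^ 4 * (X₄*X₅*X₆*X₇*X₈*X₉*X₁₀) :=
    mul_le_mul_of_nonneg_left c10 (by positivity)
  have hrw : X₁ ^ 4 * X₄ * X₅ * X₆ * X₇ * X₈ * X₉ * X₁₀ =
      X₁ ^ 4 * (X₄*X₅*X₆*X₇*X₈*X₉*X₁₀) := by ring
  rw [hrw]
  linarith [hl4, hl5, hl6, hl7, hl8, hl9, hl10]
end
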